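/- Dini derivative estimates for the extremal velocities: let (x, v) be a solution of the ICS system on [0,∞) with sup_i(‖x_i(0)‖ + ‖v_i(0)‖) < ∞, and suppose ψ̲ : [0,∞) → [0,∞) is a continuous function such that inf_{i,j∈ℕ} ψ(‖x_j(t) − x_i(t)‖) ≥ ψ̲(t) for all t ≥ 0. Then for each k ∈ {1,…,d} and all t > 0: D⁺M^(k)(t) ≤ −κ ψ̲(t) ∑_{j=1}^∞ m_j |M^(k)(t) − v_j^k(t)|^α and D⁻m^(k)(t) ≥ κ ψ̲(t) ∑_{j=1}^∞ m_j |v_j^k(t) − m^(k)(t)|^α. -/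

import Mathlib

open Filter MeasureTheory
open scoped Topology

noncomputable section

/-- Componentwise sign-power map `Γ`. -/
def Gam (d : ℕ) (α : ℝ) (v : EuclideanSpace ℝ (Fin d)) : EuclideanSpace ℝ (Fin d) :=
  WithLp.toLp 2 (fun k => Real.sign (v k) * |v k| ^ α)

/-- Right-hand side of the ICS velocity equation. -/
def icsRHS (d : ℕ) (κ α : ℝ) (m : ℕ → ℝ) (ψ : ℝ → ℝ)
    (x v : ℕ → ℝ → EuclideanSpace ℝ (Fin d)) (i : ℕ) (t : ℝ) :
    EuclideanSpace ℝ (Fin d) :=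
  κ • ∑' j, (m j * ψ ‖x j t - x i t‖) • Gam d α (v j t - v i t)

/-- Solution of the infinite Cucker–Smale system on the set `s`, satisfying the ODE on `sInt`:
uniform boundedness on compact subsets, continuity, `ẋᵢ = vᵢ`, and
`v̇ᵢ = κ ∑ⱼ mⱼ ψ(‖xⱼ-xᵢ‖) Γ(vⱼ-vᵢ)` with the series converging absolutely. -/
def IsICSSolOn (d : ℕ) (κ α : ℝ) (m : ℕ → ℝ) (ψ : ℝ → ℝ)
    (x v : ℕ → ℝ → EuclideanSpace ℝ (Fin d)) (s sInt : Set ℝ) : Prop :=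
  (∀ K : Set ℝ, K ⊆ s → IsCompact K → ∃ C : ℝ, ∀ i, ∀ t ∈ K, ‖x i t‖ + ‖v i t‖ ≤ C) ∧
  (∀ i, ContinuousOn (x i) s) ∧
  (∀ i, ContinuousOn (v i) s) ∧
  (∀ i, ∀ t ∈ sInt,
      HasDerivAt (x i) (v i t) t ∧
      Summable (fun j => ‖(m j * ψ ‖x j t - x i t‖) • Gam d α (v j t - v i t)‖) ∧
      HasDerivAt (v i) (icsRHS d κ α m ψ x v i t) t)

/-- Upper right Dini derivative `D⁺f(t) = limsup_{h→0⁺} (f(t+h)-f(t))/h`. -/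
def diniUR (f : ℝ → ℝ) (t : ℝ) : ℝ :=
  limsup (fun h => (f (t + h) - f t) / h) (𝓝[>] (0 : ℝ))

/-- Lower right Dini derivative `D⁻f(t) = liminf_{h→0⁺} (f(t+h)-f(t))/h`. -/
def diniLR (f : ℝ → ℝ) (t : ℝ) : ℝ :=
  liminf (fun h => (f (t + h) - f t) / h) (𝓝[>] (0 : ℝ))

/-- `M^(k)(t) = sup_i v_i^k(t)`. -/
def Msup (d : ℕ) (v : ℕ → ℝ → EuclideanSpace ℝ (Fin d)) (k : Fin d) (t : ℝ) : ℝ :=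
  ⨆ i, v i t k

/-- `m^(k)(t) = inf_i v_i^k(t)`. -/
def minf (d : ℕ) (v : ℕ → ℝ → EuclideanSpace ℝ (Fin d)) (k : Fin d) (t : ℝ) : ℝ :=
  ⨅ i, v i t k

/-- Component velocity diameter `D_v^(k)(t) = M^(k)(t) - m^(k)(t)`. -/
def Dv (d : ℕ) (v : ℕ → ℝ → EuclideanSpace ℝ (Fin d)) (k : Fin d) (t : ℝ) : ℝ :=
  Msup d v k t - minf d v k t

/-- Position diameter `D_x(t) = sup_{i,j} ‖x_i(t) - x_j(t)‖`. -/
def Dx (d : ℕ) (x : ℕ → ℝ → EuclideanSpace ℝ (Fin d)) (t : ℝ) : ℝ :=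
  ⨆ p : ℕ × ℕ, ‖x p.1 t - x p.2 t‖

/-- Weighted `ℓ²_m` seminorm. -/
def wnorm (d : ℕ) (m : ℕ → ℝ) (u : ℕ → EuclideanSpace ℝ (Fin d)) : ℝ :=
  Real.sqrt (∑' i, m i * ‖u i‖ ^ 2)


/-! Fix a velocity component `u_i = v_i^k`; near `t` all `u_i` are uniformly Lipschitz. Let
`M = sup_i u_i`, fix `ε > 0` and a short step `h`. A particle that ends the step above
`M(t) - O(h)` stayed within `O(h)` of `M(t)` throughout, so during the step it trails every `u_j`
by at most `O(h)` and leads it by at least `M(t) - u_j(t) - O(h)`. As `r ↦ r^α` is subadditive,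
the alignment force on it is then at most `κ (O(h^α) - ψ̲(s) ∑_j m_j (M(t) - u_j(t))^α)`, which by
continuity of `ψ̲` is below `-κ ψ̲(t) ∑_j m_j (M(t) - u_j(t))^α + ε`. Hence every `u_i`, and so
`M`, ends the step below `M(t) + h (-κ ψ̲(t) ∑_j m_j (M(t) - u_j(t))^α + ε)`. The estimate for
`inf_i u_i` follows by applying this to `-u`, as `Γ` is odd. -/

open Set

/-- `Gam d α v k = signPow α (v k)`. -/
def signPow (α y : ℝ) : ℝ := Real.sign y * |y| ^ α

section SignPow

variable {α y : ℝ}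

lemma signPow_neg : signPow α (-y) = -signPow α y := by
  simp only [signPow, Real.sign_neg, abs_neg, neg_mul]

lemma signPow_sub_comm (a b : ℝ) : signPow α (a - b) = -signPow α (b - a) := by
  rw [← neg_sub, signPow_neg]

lemma signPow_of_nonneg (hα : 0 < α) (hy : 0 ≤ y) : signPow α y = y ^ α := by
  rcases hy.eq_or_lt with rfl | hy
  · simp [signPow, Real.zero_rpow hα.ne']
  · rw [signPow, Real.sign_of_pos hy, one_mul, abs_of_pos hy]

lemma signPow_of_nonpos (hα : 0 < α) (hy : y ≤ 0) : signPow α y = -(-y) ^ α := by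
  rw [← neg_neg y, signPow_neg, signPow_of_nonneg hα (neg_nonneg.2 hy), neg_neg]

lemma abs_signPow (hα : 0 < α) (y : ℝ) : |signPow α y| = |y| ^ α := by
  rcases le_total 0 y with hy | hy
  · rw [signPow_of_nonneg hα hy, abs_of_nonneg hy, abs_of_nonneg (Real.rpow_nonneg hy _)]
  · rw [signPow_of_nonpos hα hy, abs_neg, abs_of_nonpos hy,
      abs_of_nonneg (Real.rpow_nonneg (neg_nonneg.2 hy) _)]

lemma mul_signPow_le {ψ w z c : ℝ} (hα0 : 0 < α) (hα1 : α ≤ 1) (hψ0 : 0 ≤ ψ) (hψw : ψ ≤ w)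
    (hw1 : w ≤ 1) (hz : 0 ≤ z) (hc : 0 ≤ c) (hyc : y ≤ c) (hzy : z - c ≤ -y) :
    w * signPow α y ≤ 2 * c ^ α - ψ * z ^ α := by
  have hcα : 0 ≤ c ^ α := Real.rpow_nonneg hc _
  rcases le_total y 0 with hy | hy
  · have hyα : 0 ≤ (-y) ^ α := Real.rpow_nonneg (neg_nonneg.2 hy) _
    have hzα : z ^ α ≤ (-y) ^ α + c ^ α :=
      (Real.rpow_le_rpow hz (by linarith) hα0.le).trans
        (Real.rpow_add_le_add_rpow (neg_nonneg.2 hy) hc hα0.le hα1)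
    rw [signPow_of_nonpos hα0 hy]
    nlinarith [mul_le_mul_of_nonneg_right hψw hyα, mul_le_mul_of_nonneg_left hzα hψ0]
  · have hyα : y ^ α ≤ c ^ α := Real.rpow_le_rpow hy hyc hα0.le
    have hzα : z ^ α ≤ c ^ α := Real.rpow_le_rpow hz (by linarith) hα0.le
    rw [signPow_of_nonneg hα0 hy]
    nlinarith [Real.rpow_nonneg hy α, Real.rpow_nonneg hz α]

end SignPow

section WeightedSums

variable {ι : Type*} {m f : ι → ℝ} {C : ℝ}

lemma summable_mul_of_abs_le (hm0 : ∀ j, 0 ≤ m j) (hm : Summable m) (hf : ∀ j, |f j| ≤ C) :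
    Summable fun j => m j * f j :=
  (hm.mul_right C).of_norm_bounded fun j => by
    rw [Real.norm_eq_abs, abs_mul, abs_of_nonneg (hm0 j)]
    exact mul_le_mul_of_nonneg_left (hf j) (hm0 j)

lemma abs_tsum_mul_le (hm0 : ∀ j, 0 ≤ m j) (hm : HasSum m 1) (hf : ∀ j, |f j| ≤ C) :
    |∑' j, m j * f j| ≤ C := by
  simpa using tsum_of_norm_bounded (f := fun j => m j * f j) (hm.mul_right C) fun j => by
    rw [Real.norm_eq_abs, abs_mul, abs_of_nonneg (hm0 j)]
    exact mul_le_mul_of_nonneg_left (hf j) (hm0 j)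

lemma tsum_mul_signPow_le {α ψ c : ℝ} {w y z : ι → ℝ} (hα0 : 0 < α) (hα1 : α ≤ 1)
    (hm0 : ∀ j, 0 ≤ m j) (hm : HasSum m 1) (hψ0 : 0 ≤ ψ) (hw : ∀ j, ψ ≤ w j ∧ w j ≤ 1)
    (hz : ∀ j, 0 ≤ z j) (hc : 0 ≤ c) (hyc : ∀ j, y j ≤ c) (hzy : ∀ j, z j - c ≤ -y j)
    (hsy : Summable fun j => m j * w j * signPow α (y j))
    (hsz : Summable fun j => m j * z j ^ α) :
    ∑' j, m j * w j * signPow α (y j) ≤ 2 * c ^ α - ψ * ∑' j, m j * z j ^ α := by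
  calc ∑' j, m j * w j * signPow α (y j)
      ≤ ∑' j, (m j * (2 * c ^ α) - ψ * (m j * z j ^ α)) := by
        refine hsy.tsum_le_tsum (fun j => ?_) ((hm.summable.mul_right _).sub (hsz.mul_left ψ))
        have := mul_le_mul_of_nonneg_left
          (mul_signPow_le hα0 hα1 hψ0 (hw j).1 (hw j).2 (hz j) hc (hyc j) (hzy j)) (hm0 j)
        linarith
    _ = 2 * c ^ α - ψ * ∑' j, m j * z j ^ α := by
        rw [(hm.summable.mul_right _).tsum_sub (hsz.mul_left ψ), tsum_mul_right, hm.tsum_eq,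
          one_mul, tsum_mul_left]

end WeightedSums

section MeanValue

variable {f f' : ℝ → ℝ}

lemma sub_le_mul_sub_of_hasDerivAt_le {a b K : ℝ} (hab : a ≤ b)
    (hf : ∀ s ∈ Icc a b, HasDerivAt f (f' s) s) (hK : ∀ s ∈ Icc a b, f' s ≤ K) :
    f b - f a ≤ K * (b - a) :=
  (convex_Icc a b).image_sub_le_mul_sub_of_deriv_le
    (fun s hs => (hf s hs).continuousAt.continuousWithinAt)
    (fun s hs => (hf s (interior_subset hs)).differentiableAt.differentiableWithinAt)
    (fun s hs => (hf s (interior_subset hs)).deriv ▸ hK s (interior_subset hs))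
    a (left_mem_Icc.2 hab) b (right_mem_Icc.2 hab) hab

lemma abs_sub_le_mul_sub_of_hasDerivAt {a b L : ℝ} (hab : a ≤ b)
    (hf : ∀ s ∈ Icc a b, HasDerivAt f (f' s) s) (hL : ∀ s ∈ Icc a b, |f' s| ≤ L) :
    |f b - f a| ≤ L * (b - a) := by
  simpa [abs_of_nonneg (sub_nonneg.2 hab)] using
    (convex_Icc a b).norm_image_sub_le_of_norm_hasDerivWithin_le
      (fun s hs => (hf s hs).hasDerivWithinAt) hL (left_mem_Icc.2 hab) (right_mem_Icc.2 hab)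

lemma le_add_mul_of_hasDerivAt_le_near {t h a K L : ℝ} (hh : 0 ≤ h)
    (hf : ∀ s ∈ Icc t (t + h), HasDerivAt f (f' s) s)
    (hL : ∀ s ∈ Icc t (t + h), |f' s| ≤ L)
    (hK : ∀ s ∈ Icc t (t + h), a + (K - L) * h ≤ f s → f' s ≤ K) (hft : f t ≤ a) :
    f (t + h) ≤ a + K * h := by
  by_contra! hlt
  -- having ended above `a + K h`, the `L`-Lipschitz `f` stayed above `a + (K - L) h`
  have hhigh : ∀ s ∈ Icc t (t + h), a + (K - L) * h ≤ f s := fun s hs => by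
    have hL0 : 0 ≤ L := (abs_nonneg _).trans (hL s hs)
    have := sub_le_mul_sub_of_hasDerivAt_le hs.2
      (fun r hr => hf r ⟨hs.1.trans hr.1, hr.2⟩)
      (fun r hr => (le_abs_self _).trans (hL r ⟨hs.1.trans hr.1, hr.2⟩))
    nlinarith [hs.1]
  have := sub_le_mul_sub_of_hasDerivAt_le (by linarith) hf fun s hs => hK s hs (hhigh s hs)
  linarith

end MeanValue

lemma diniUR_le_of_forall_pos {f : ℝ → ℝ} {t K L : ℝ}
    (hlow : ∀ᶠ h in 𝓝[>] 0, f t - L * h ≤ f (t + h))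
    (hup : ∀ ε > 0, ∀ᶠ h in 𝓝[>] 0, f (t + h) ≤ f t + (K + ε) * h) :
    diniUR f t ≤ K := by
  have hcobdd : IsCoboundedUnder (· ≤ ·) (𝓝[>] (0 : ℝ)) fun h => (f (t + h) - f t) / h :=
    isCoboundedUnder_le_of_eventually_le _ (x := -L) <| by
      filter_upwards [hlow, self_mem_nhdsWithin] with h hh (hpos : 0 < h)
      rw [le_div_iff₀ hpos]
      linarith
  refine le_of_forall_pos_le_add fun ε hε => limsup_le_of_le hcobdd ?_
  filter_upwards [hup ε hε, self_mem_nhdsWithin] with h hh (hpos : 0 < h)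
  rw [div_le_iff₀ hpos]
  linarith

lemma diniUR_neg (f : ℝ → ℝ) (t : ℝ) : diniUR (fun s => -f s) t = -diniLR f t := by
  have hquot : (fun h => (-f (t + h) - -f t) / h) = fun h => -((f (t + h) - f t) / h) := by
    ext h; ring
  rw [diniUR, diniLR, hquot, Filter.limsup_eq, Filter.liminf_eq, Real.sInf_def]
  congr 2
  ext a
  simp only [Set.mem_neg, Set.mem_ofPred_eq, neg_le_neg_iff]

lemma iSup_neg_eq_neg_iInf {ι : Type*} (f : ι → ℝ) : ⨆ i, -f i = -⨅ i, f i := by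
  simpa using (Real.mul_iInf_of_nonpos (r := -1) (by norm_num) f).symm

section AlignmentFlow

variable {ι : Type*} {κ α : ℝ} {m : ι → ℝ} {φ : ι → ι → ℝ → ℝ} {ψu : ℝ → ℝ}
  {u : ι → ℝ → ℝ} {t T B : ℝ}

variable (κ α m φ) in
def alignmentForce (u : ι → ℝ → ℝ) (i : ι) (s : ℝ) : ℝ :=
  κ * ∑' j, m j * φ i j s * signPow α (u j s - u i s)

variable (κ α m φ ψu) in
/-- For a velocity component `u i s = v i s k` of an ICS solution, `φ i j s = ψ ‖x j s - x i s‖`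
and `ψu` is the lower bound `ψ̲`. -/
structure IsAlignmentFlowOn (u : ι → ℝ → ℝ) (t T B : ℝ) : Prop where
  abs_le_bound : ∀ i, ∀ s ∈ Icc t T, |u i s| ≤ B
  weight_mem : ∀ i j, ∀ s ∈ Icc t T, ψu s ≤ φ i j s ∧ φ i j s ≤ 1
  lowerWeight_nonneg : ∀ s ∈ Icc t T, 0 ≤ ψu s
  hasDerivAt : ∀ i, ∀ s ∈ Icc t T, HasDerivAt (u i) (alignmentForce κ α m φ u i s) s

lemma alignmentForce_neg (i : ι) (s : ℝ) :
    alignmentForce κ α m φ (fun i s => -u i s) i s = -alignmentForce κ α m φ u i s := by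
  simp only [alignmentForce, neg_sub_neg, signPow_sub_comm (u i s), mul_neg, tsum_neg]

namespace IsAlignmentFlowOn

lemma neg (hu : IsAlignmentFlowOn κ α m φ ψu u t T B) :
    IsAlignmentFlowOn κ α m φ ψu (fun i s => -u i s) t T B where
  abs_le_bound i s hs := (abs_neg (u i s)).trans_le (hu.abs_le_bound i s hs)
  weight_mem := hu.weight_mem
  lowerWeight_nonneg := hu.lowerWeight_nonneg
  hasDerivAt i s hs := alignmentForce_neg (u := u) i s ▸ (hu.hasDerivAt i s hs).neg

lemma abs_weight_mul_signPow_le (hu : IsAlignmentFlowOn κ α m φ ψu u t T B) (hα0 : 0 < α)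
    (i j : ι) {s : ℝ} (hs : s ∈ Icc t T) :
    |φ i j s * signPow α (u j s - u i s)| ≤ (2 * B) ^ α := by
  have hφ : |φ i j s| ≤ 1 := by
    have := hu.lowerWeight_nonneg s hs
    exact abs_le.2 ⟨by linarith [(hu.weight_mem i j s hs).1], (hu.weight_mem i j s hs).2⟩
  have hdiff : |u j s - u i s| ≤ 2 * B := by
    linarith [abs_sub (u j s) (u i s), hu.abs_le_bound i s hs, hu.abs_le_bound j s hs]
  rw [abs_mul, abs_signPow hα0]
  exact (mul_le_of_le_one_left (by positivity) hφ).trans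
    (Real.rpow_le_rpow (abs_nonneg _) hdiff hα0.le)

lemma abs_alignmentForce_le (hu : IsAlignmentFlowOn κ α m φ ψu u t T B) (hκ : 0 ≤ κ)
    (hα0 : 0 < α) (hm0 : ∀ j, 0 ≤ m j) (hm : HasSum m 1) (i : ι) {s : ℝ} (hs : s ∈ Icc t T) :
    |alignmentForce κ α m φ u i s| ≤ κ * (2 * B) ^ α := by
  rw [alignmentForce, abs_mul, abs_of_nonneg hκ]
  simp only [mul_assoc]
  exact mul_le_mul_of_nonneg_left
    (abs_tsum_mul_le hm0 hm fun j => hu.abs_weight_mul_signPow_le hα0 i j hs) hκ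

lemma abs_sub_le (hu : IsAlignmentFlowOn κ α m φ ψu u t T B) {L : ℝ}
    (hL : ∀ i, ∀ s ∈ Icc t T, |alignmentForce κ α m φ u i s| ≤ L) (i : ι) {s : ℝ}
    (hs : s ∈ Icc t T) : |u i s - u i t| ≤ L * (s - t) :=
  abs_sub_le_mul_sub_of_hasDerivAt hs.1
    (fun r hr => hu.hasDerivAt i r (Icc_subset_Icc_right hs.2 hr))
    (fun r hr => hL i r (Icc_subset_Icc_right hs.2 hr))

lemma bddAbove_range (hu : IsAlignmentFlowOn κ α m φ ψu u t T B) {s : ℝ} (hs : s ∈ Icc t T) :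
    BddAbove (range fun i => u i s) :=
  ⟨B, by rintro _ ⟨i, rfl⟩; exact (abs_le.1 (hu.abs_le_bound i s hs)).2⟩

lemma iSup_add_le [Nonempty ι] (hu : IsAlignmentFlowOn κ α m φ ψu u t T B) (hκ : 0 ≤ κ)
    (hα0 : 0 < α) (hα1 : α ≤ 1) (hm0 : ∀ j, 0 ≤ m j) (hm : HasSum m 1) {L K h : ℝ}
    (hL : ∀ i, ∀ s ∈ Icc t T, |alignmentForce κ α m φ u i s| ≤ L) (hh : 0 ≤ h) (hhT : t + h ≤ T)
    (hK : ∀ s ∈ Icc t (t + h), κ * (2 * ((2 * L - K) * h) ^ α -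
      ψu s * ∑' j, m j * |(⨆ i, u i t) - u j t| ^ α) ≤ K) :
    ⨆ i, u i (t + h) ≤ (⨆ i, u i t) + K * h := by
  have htT : t ∈ Icc t T := ⟨le_rfl, by linarith⟩
  have hsub : Icc t (t + h) ⊆ Icc t T := Icc_subset_Icc_right hhT
  have hL0 : 0 ≤ L := (abs_nonneg _).trans (hL (Classical.arbitrary ι) t htT)
  refine ciSup_le fun i => le_add_mul_of_hasDerivAt_le_near hh
    (fun s hs => hu.hasDerivAt i s (hsub hs)) (fun s hs => hL i s (hsub hs)) (fun s hs hhigh => ?_)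
    (le_ciSup (hu.bddAbove_range htT) i)
  rcases lt_or_ge (2 * L) K with hKL | hKL
  · linarith [le_abs_self (alignmentForce κ α m φ u i s), hL i s (hsub hs)]
  -- as `M(t) + (K - L) h ≤ u i s`, with `c = (2 L - K) h` we have `u j s - u i s ≤ c` and
  -- `M(t) - u j t - c ≤ u i s - u j s`
  have hgrowth : ∀ j, u j s ≤ u j t + L * h := fun j => by
    nlinarith [(abs_le.1 (hu.abs_sub_le hL j (hsub hs))).2, hs.2]
  have hle : ∀ j, u j t ≤ ⨆ i, u i t := le_ciSup (hu.bddAbove_range htT)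
  have hsummable {f : ι → ℝ} {C : ℝ} (hf : ∀ j, |f j| ≤ C) : Summable fun j => m j * f j :=
    summable_mul_of_abs_le hm0 hm.summable hf
  refine (mul_le_mul_of_nonneg_left ?_ hκ).trans (hK s hs)
  refine tsum_mul_signPow_le hα0 hα1 hm0 hm (hu.lowerWeight_nonneg s (hsub hs))
    (fun j => hu.weight_mem i j s (hsub hs)) (fun j => abs_nonneg _) (by nlinarith)
    (fun j => by nlinarith [hle j, hgrowth j]) (fun j => ?_) ?_ ?_
  · rw [abs_of_nonneg (sub_nonneg.2 (hle j))]
    nlinarith [hgrowth j]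
  · simpa only [mul_assoc] using hsummable fun j => hu.abs_weight_mul_signPow_le hα0 i j (hsub hs)
  · have hM : (⨆ i, u i t) ≤ B := ciSup_le fun i => (abs_le.1 (hu.abs_le_bound i t htT)).2
    refine hsummable (C := (2 * B) ^ α) fun j => ?_
    rw [abs_of_nonneg (by positivity), abs_of_nonneg (sub_nonneg.2 (hle j))]
    exact Real.rpow_le_rpow (sub_nonneg.2 (hle j))
      (by linarith [(abs_le.1 (hu.abs_le_bound j t htT)).1]) hα0.le

theorem diniUR_iSup_le [Nonempty ι] (hu : IsAlignmentFlowOn κ α m φ ψu u t T B) (hκ : 0 ≤ κ)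
    (hα0 : 0 < α) (hα1 : α ≤ 1) (hm0 : ∀ j, 0 ≤ m j) (hm : HasSum m 1) (htT : t < T)
    (hψu : ContinuousWithinAt ψu (Icc t T) t) :
    diniUR (fun s => ⨆ i, u i s) t ≤ -(κ * ψu t * ∑' j, m j * |(⨆ i, u i t) - u j t| ^ α) := by
  set S := ∑' j, m j * |(⨆ i, u i t) - u j t| ^ α
  set L := κ * (2 * B) ^ α
  have hL := hu.abs_alignmentForce_le hκ hα0 hm0 hm
  have hstep : ∀ᶠ h in 𝓝[>] 0, h ≤ T - t :=
    mem_of_superset (Ioc_mem_nhdsGT (sub_pos.2 htT)) fun _ hh => hh.2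
  refine diniUR_le_of_forall_pos (L := L) ?_ fun ε hε => ?_
  · filter_upwards [hstep, self_mem_nhdsWithin] with h hhT (hh : 0 < h)
    have hth : t + h ∈ Icc t T := ⟨by linarith, by linarith⟩
    refine sub_le_iff_le_add.2 (ciSup_le fun i => ?_)
    have := (abs_le.1 (hu.abs_sub_le hL i hth)).1
    have := le_ciSup (hu.bddAbove_range hth) i
    linarith
  set K := -(κ * ψu t * S) + ε
  have hweight : ∀ᶠ s in 𝓝[≥] t, κ * ((ψu t - ψu s) * S) < ε / 2 := by
    rw [← nhdsWithin_Icc_eq_nhdsGE htT]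
    refine Tendsto.eventually_lt_const (half_pos hε) ?_
    simpa using ((tendsto_const_nhds (x := ψu t) |>.sub hψu).mul_const S).const_mul κ
  obtain ⟨τ, hτ, hτweight⟩ := mem_nhdsGE_iff_exists_Ico_subset.1 hweight
  have hpow : ∀ᶠ h in 𝓝[>] 0, κ * (2 * ((2 * L - K) * h) ^ α) < ε / 2 := by
    refine nhdsWithin_le_nhds (Tendsto.eventually_lt_const (half_pos hε) ?_)
    have : Continuous fun h : ℝ => κ * (2 * ((2 * L - K) * h) ^ α) := by
      fun_prop (disch := exact hα0.le)
    simpa [Real.zero_rpow hα0.ne'] using this.tendsto 0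
  filter_upwards [hstep, Ioo_mem_nhdsGT (sub_pos.2 hτ), hpow] with h hhT hhτ hhpow
  refine hu.iSup_add_le hκ hα0 hα1 hm0 hm hL hhτ.1.le (by linarith) fun s hs => ?_
  have : κ * ((ψu t - ψu s) * S) < ε / 2 := hτweight ⟨hs.1, by linarith [hs.2, hhτ.2]⟩
  nlinarith

theorem le_diniLR_iInf [Nonempty ι] (hu : IsAlignmentFlowOn κ α m φ ψu u t T B) (hκ : 0 ≤ κ)
    (hα0 : 0 < α) (hα1 : α ≤ 1) (hm0 : ∀ j, 0 ≤ m j) (hm : HasSum m 1) (htT : t < T)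
    (hψu : ContinuousWithinAt ψu (Icc t T) t) :
    κ * ψu t * ∑' j, m j * |u j t - ⨅ i, u i t| ^ α ≤ diniLR (fun s => ⨅ i, u i s) t := by
  have := hu.neg.diniUR_iSup_le hκ hα0 hα1 hm0 hm htT hψu
  simp only [iSup_neg_eq_neg_iInf, diniUR_neg, neg_sub_neg] at this
  linarith

end IsAlignmentFlowOn

end AlignmentFlow

lemma icsRHS_apply {d : ℕ} {κ α : ℝ} {m : ℕ → ℝ} {ψ : ℝ → ℝ}
    {x v : ℕ → ℝ → EuclideanSpace ℝ (Fin d)} {i : ℕ} {s : ℝ}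
    (hsum : Summable fun j => ‖(m j * ψ ‖x j s - x i s‖) • Gam d α (v j s - v i s)‖) (k : Fin d) :
    icsRHS d κ α m ψ x v i s k =
      alignmentForce κ α m (fun i j s => ψ ‖x j s - x i s‖) (fun i s => v i s k) i s := by
  simp only [icsRHS, PiLp.smul_apply, smul_eq_mul, alignmentForce]
  congr 1
  exact (EuclideanSpace.proj k).map_tsum hsum.of_norm

lemma IsICSSolOn.isAlignmentFlowOn {d : ℕ} {κ α : ℝ} {m : ℕ → ℝ} {ψ ψu : ℝ → ℝ}
    {x v : ℕ → ℝ → EuclideanSpace ℝ (Fin d)} (hsol : IsICSSolOn d κ α m ψ x v (Ici 0) (Ioi 0))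
    (hψanti : AntitoneOn ψ (Ici 0)) (hψ0 : ψ 0 = 1) (hψunn : ∀ t, 0 ≤ t → 0 ≤ ψu t)
    (hψulb : ∀ t, 0 ≤ t → ∀ i j : ℕ, ψu t ≤ ψ ‖x j t - x i t‖) (k : Fin d) {t T : ℝ}
    (ht : 0 < t) :
    ∃ C, IsAlignmentFlowOn κ α m (fun i j s => ψ ‖x j s - x i s‖) ψu (fun i s => v i s k) t T C := by
  obtain ⟨hbdd, -, -, hode⟩ := hsol
  obtain ⟨C, hC⟩ := hbdd (Icc 0 T) Icc_subset_Ici_self isCompact_Icc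
  have hpos : ∀ s ∈ Icc t T, 0 < s := fun s hs => ht.trans_le hs.1
  refine ⟨C, fun i s hs => ?_, fun i j s hs => ⟨hψulb s (hpos s hs).le i j,
    hψ0 ▸ hψanti self_mem_Ici (norm_nonneg _) (norm_nonneg _)⟩,
    fun s hs => hψunn s (hpos s hs).le, fun i s hs => ?_⟩
  · have := hC i s ⟨(hpos s hs).le, hs.2⟩
    have := PiLp.norm_apply_le (v i s) k
    rw [Real.norm_eq_abs] at this
    linarith [norm_nonneg (x i s)]
  · obtain ⟨-, hsum, hv⟩ := hode i s (hpos s hs)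
    rw [← icsRHS_apply hsum k]
    exact (EuclideanSpace.proj k).hasFDerivAt.comp_hasDerivAt s hv

theorem stmt8_general (d : ℕ) (κ : ℝ) (hκ : 0 < κ) (α : ℝ) (hα0 : 0 < α) (hα1 : α < 1)
    (m : ℕ → ℝ) (hm0 : ∀ j, 0 ≤ m j) (hmS : Summable m) (hm1 : ∑' j, m j = 1)
    (ψ : ℝ → ℝ)
    (hψanti : AntitoneOn ψ (Set.Ici 0)) (hψ0 : ψ 0 = 1)
    (x v : ℕ → ℝ → EuclideanSpace ℝ (Fin d))
    (hsol : IsICSSolOn d κ α m ψ x v (Set.Ici 0) (Set.Ioi 0))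
    (ψu : ℝ → ℝ) (hψucont : ContinuousOn ψu (Set.Ici 0))
    (hψunn : ∀ t, 0 ≤ t → 0 ≤ ψu t)
    (hψulb : ∀ t, 0 ≤ t → ∀ i j : ℕ, ψu t ≤ ψ ‖x j t - x i t‖)
    (k : Fin d) :
    ∀ t : ℝ, 0 < t →
      diniUR (Msup d v k) t ≤ -(κ * ψu t * ∑' j, m j * |Msup d v k t - v j t k| ^ α) ∧
      κ * ψu t * ∑' j, m j * |v j t k - minf d v k t| ^ α ≤ diniLR (minf d v k) t := by
  intro t ht
  obtain ⟨C, hflow⟩ := hsol.isAlignmentFlowOn (T := t + 1) hψanti hψ0 hψunn hψulb k ht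
  have hm : HasSum m 1 := hm1 ▸ hmS.hasSum
  have hψu : ContinuousWithinAt ψu (Icc t (t + 1)) t :=
    (hψucont t ht.le).mono fun s hs => ht.le.trans hs.1
  exact ⟨hflow.diniUR_iSup_le hκ.le hα0 hα1.le hm0 hm (lt_add_one t) hψu,
    hflow.le_diniLR_iInf hκ.le hα0 hα1.le hm0 hm (lt_add_one t) hψu⟩

/-- Dini derivative estimates for the extremal velocities under a continuous
lower bound `ψ̲` on the communication weights. -/
theorem stmt8 (d : ℕ) (hd : 1 ≤ d) (κ : ℝ) (hκ : 0 < κ) (α : ℝ) (hα0 : 0 < α) (hα1 : α < 1)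
    (m : ℕ → ℝ) (hm0 : ∀ j, 0 ≤ m j) (hmS : Summable m) (hm1 : ∑' j, m j = 1)
    (ψ : ℝ → ℝ) (hψLip : ∃ L : NNReal, LipschitzOnWith L ψ (Set.Ici 0))
    (hψanti : AntitoneOn ψ (Set.Ici 0)) (hψ0 : ψ 0 = 1)
    (hψnn : ∀ r, 0 ≤ r → 0 ≤ ψ r)
    (x v : ℕ → ℝ → EuclideanSpace ℝ (Fin d))
    (hsol : IsICSSolOn d κ α m ψ x v (Set.Ici 0) (Set.Ioi 0))
    (hinit : ∃ C : ℝ, ∀ i, ‖x i 0‖ + ‖v i 0‖ ≤ C)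
    (ψu : ℝ → ℝ) (hψucont : ContinuousOn ψu (Set.Ici 0))
    (hψunn : ∀ t, 0 ≤ t → 0 ≤ ψu t)
    (hψulb : ∀ t, 0 ≤ t → ∀ i j : ℕ, ψu t ≤ ψ ‖x j t - x i t‖)
    (k : Fin d) :
    ∀ t : ℝ, 0 < t →
      diniUR (Msup d v k) t ≤ -(κ * ψu t * ∑' j, m j * |Msup d v k t - v j t k| ^ α) ∧
      κ * ψu t * ∑' j, m j * |v j t k - minf d v k t| ^ α ≤ diniLR (minf d v k) t :=
  stmt8_general d κ hκ α hα0 hα1 m hm0 hmS hm1 ψ hψanti hψ0 x v hsol ψu hψucont hψunn hψulb k
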